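/- Let TS be any test suite such that for all completely specified DFSMs S in the fault domain D, L(S) ⊆ L(M1') iff S passes TS with the reduction pass criterion. Let Π̄ = ⋃_{i=1}^k Π(q_i).{x_i}. Then any test suite TS' with pref(TS) ∩ Π̄ ⊆ TS' is complete for testing R: for all S ∈ D, S passes TS' (with the reduction pass criterion against M1') if and only if S ⊨ R. -/

import Mathlib

def dAfter {Q I : Type*} (δ : Q → I → Q) : Q → List I → Q
  | q, [] => q
  | q, x :: xs => dAfter δ (δ q x) xs

def oOut {Q I O : Type*} (δ : Q → I → Q) (ω : Q → I → O) : Q → List I → List O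
  | _, [] => []
  | q, x :: xs => ω q x :: oOut δ ω (δ q x) xs

/-- Admissible output set of M1' at (q,x): Z_i at requirement pairs, Σ_O elsewhere. -/
def reqOut {Q I O : Type*} {k : ℕ} (qr : Fin k → Q) (xr : Fin k → I)
    (Zr : Fin k → Set O) (q : Q) (x : I) : Set O :=
  {y | ∀ i, qr i = q → xr i = x → y ∈ Zr i}

/-- A completely specified DFSM implementation over input alphabet I, output alphabet O. -/
structure DFSM (S I O : Type*) where
  s0 : S
  δ : S → I → S
  ω : S → I → O

/-- The reduction pass criterion against M1' for a single input trace. -/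
def passes {Q S I O : Type*} {k : ℕ}
    (δM : Q → I → Q) (q0 : Q) (qr : Fin k → Q) (xr : Fin k → I) (Zr : Fin k → Set O)
    (M : DFSM S I O) (xs : List I) : Prop :=
  List.Forall₂ (fun (y : O) (z : Set O) => y ∈ z)
    (oOut M.δ M.ω M.s0 xs) (oOut δM (reqOut qr xr Zr) q0 xs)

/-!
Against M1' a trace can only fail at a step `xᵢ` taken from `qᵢ`, so `S` passes `t` iff it
meets the requirement at every prefix of `t` lying in `Π̄`. Taking `t = π.xᵢ` shows that
passing every trace is `S ⊨ R`. If `S` passes `TS'`, it meets the requirement on every prefix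
of `TS` in `Π̄`, hence passes `TS`, hence (completeness of `TS`) every trace; conversely
`S ⊨ R` lets `S` pass every trace, in particular those of `TS'`.
-/

theorem List.forall₂_append_singleton_iff {α β : Type*} {R : α → β → Prop}
    {l₁ : List α} {l₂ : List β} {a : α} {b : β} (h : l₁.length = l₂.length) :
    List.Forall₂ R (l₁ ++ [a]) (l₂ ++ [b]) ↔ List.Forall₂ R l₁ l₂ ∧ R a b := by
  refine ⟨fun hR => ⟨?_, ?_⟩, fun ⟨hl, hab⟩ => List.rel_append hl (.cons hab .nil)⟩
  · simpa [h] using List.forall₂_take_append _ _ _ hR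
  · simpa [h] using List.forall₂_drop_append _ _ _ hR

section Machine

variable {Q I O : Type*} (δ : Q → I → Q)

theorem length_oOut (ω : Q → I → O) (q : Q) (xs : List I) :
    (oOut δ ω q xs).length = xs.length := by
  induction xs generalizing q with
  | nil => rfl
  | cons x xs ih => simp [oOut, ih]

theorem oOut_append_singleton (ω : Q → I → O) (q : Q) (u : List I) (x : I) :
    oOut δ ω q (u ++ [x]) = oOut δ ω q u ++ [ω (dAfter δ q u) x] := by
  induction u generalizing q with
  | nil => rfl
  | cons y u ih => simp [oOut, dAfter, ih]

end Machine

section Passes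

variable {Q S I O : Type*} {k : ℕ}
  (δM : Q → I → Q) (q0 : Q) (qr : Fin k → Q) (xr : Fin k → I) (Zr : Fin k → Set O)
  (M : DFSM S I O)

/-- `S ⊨ R`. -/
def Satisfies : Prop :=
  ∀ (i : Fin k) (π : List I), dAfter δM q0 π = qr i →
    M.ω (dAfter M.δ M.s0 π) (xr i) ∈ Zr i

theorem passes_nil : passes δM q0 qr xr Zr M [] := List.Forall₂.nil

theorem passes_append_singleton_iff (π : List I) (x : I) :
    passes δM q0 qr xr Zr M (π ++ [x]) ↔
      passes δM q0 qr xr Zr M π ∧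
        M.ω (dAfter M.δ M.s0 π) x ∈ reqOut qr xr Zr (dAfter δM q0 π) x := by
  unfold passes
  rw [oOut_append_singleton, oOut_append_singleton]
  exact List.forall₂_append_singleton_iff (by rw [length_oOut, length_oOut])

theorem passes_iff_forall_prefix (t : List I) :
    passes δM q0 qr xr Zr M t ↔
      ∀ (i : Fin k) (π : List I), π ++ [xr i] <+: t → dAfter δM q0 π = qr i →
        M.ω (dAfter M.δ M.s0 π) (xr i) ∈ Zr i := by
  induction t using List.reverseRecOn with
  | nil => simp [passes_nil]
  | append_singleton t x ih =>
    simp only [passes_append_singleton_iff, ih, List.prefix_concat_iff,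
      List.append_singleton_inj, reqOut, Set.mem_ofPred_eq]
    constructor
    · rintro ⟨hpre, hlast⟩ i π (⟨rfl, rfl⟩ | hπ) hq
      · exact hlast i hq.symm rfl
      · exact hpre i π hπ hq
    · intro h
      exact ⟨fun i π hπ hq => h i π (.inr hπ) hq,
        fun i hq hx => hx ▸ h i t (.inl ⟨rfl, hx⟩) hq.symm⟩

theorem forall_passes_iff_satisfies :
    (∀ t, passes δM q0 qr xr Zr M t) ↔ Satisfies δM q0 qr xr Zr M := by
  simp only [passes_iff_forall_prefix]
  exact ⟨fun h i π hq => h _ i π List.prefix_rfl hq, fun h _ i π _ hq => h i π hq⟩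

end Passes

theorem stmt_15_general {Q S I O : Type*}
    (δM : Q → I → Q) (q0 : Q)
    (k : ℕ) (qr : Fin k → Q) (xr : Fin k → I) (Zr : Fin k → Set O)
    (D : Set (DFSM S I O)) (TS TS' : Set (List I))
    -- TS is complete for reduction testing against M1' on the fault domain D
    (hTS : ∀ M ∈ D, (∀ xs ∈ TS, passes δM q0 qr xr Zr M xs) ↔
      ∀ xs : List I, passes δM q0 qr xr Zr M xs)
    -- pref(TS) ∩ Π̄ ⊆ TS'
    (hTS' : ∀ w : List I, w ≠ [] → (∃ t ∈ TS, w <+: t) →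
      (∃ (i : Fin k) (π : List I), dAfter δM q0 π = qr i ∧ w = π ++ [xr i]) →
      w ∈ TS') :
    ∀ M ∈ D, (∀ xs ∈ TS', passes δM q0 qr xr Zr M xs) ↔
      (∀ (i : Fin k) (π : List I), dAfter δM q0 π = qr i →
        M.ω (dAfter M.δ M.s0 π) (xr i) ∈ Zr i) := by
  intro M hM
  refine ⟨fun hpass => ?_, fun hR xs _ => (forall_passes_iff_satisfies _ _ _ _ _ _).2 hR xs⟩
  rw [← Satisfies, ← forall_passes_iff_satisfies, ← hTS M hM]
  intro t ht
  rw [passes_iff_forall_prefix]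
  intro i π hπt hq
  have hw : π ++ [xr i] ∈ TS' :=
    hTS' _ (by simp) ⟨t, ht, hπt⟩ ⟨i, π, hq, rfl⟩
  exact (passes_iff_forall_prefix _ _ _ _ _ _ _).1 (hpass _ hw) i π List.prefix_rfl hq

/-- if TS is a complete reduction test suite against M1' for fault domain D,
then any suite TS' containing pref(TS) ∩ Π̄ is complete for testing the composite
requirement R: for all S ∈ D, S passes TS' iff S ⊨ R. -/
theorem stmt_15 {Q S I O : Type*}
    (δM : Q → I → Q) (ωM : Q → I → O) (q0 : Q)
    -- M prime: all states reachable, distinct states distinguishable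
    (hMreach : ∀ q : Q, ∃ π : List I, dAfter δM q0 π = q)
    (hMdist : ∀ q q' : Q, (∀ xs : List I, oOut δM ωM q xs = oOut δM ωM q' xs) → q = q')
    (k : ℕ) (qr : Fin k → Q) (xr : Fin k → I) (Zr : Fin k → Set O)
    (hZ : ∀ i, ωM (qr i) (xr i) ∈ Zr i)
    (D : Set (DFSM S I O)) (TS TS' : Set (List I))
    -- TS is complete for reduction testing against M1' on the fault domain D
    (hTS : ∀ M ∈ D, (∀ xs ∈ TS, passes δM q0 qr xr Zr M xs) ↔
      ∀ xs : List I, passes δM q0 qr xr Zr M xs)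
    -- pref(TS) ∩ Π̄ ⊆ TS'
    (hTS' : ∀ w : List I, w ≠ [] → (∃ t ∈ TS, w <+: t) →
      (∃ (i : Fin k) (π : List I), dAfter δM q0 π = qr i ∧ w = π ++ [xr i]) →
      w ∈ TS') :
    ∀ M ∈ D, (∀ xs ∈ TS', passes δM q0 qr xr Zr M xs) ↔
      (∀ (i : Fin k) (π : List I), dAfter δM q0 π = qr i →
        M.ω (dAfter M.δ M.s0 π) (xr i) ∈ Zr i) :=
  stmt_15_general δM q0 k qr xr Zr D TS TS' hTS hTS'
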